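/- Let G and G' be edge-neighboring graphs on V with G ⊆ G' (G' is G with one additional edge), and let τ ∈ ℕ. Then f(G, τ) ≤ f(G', τ) ≤ f(G, τ) + 2. (Equivalently, the paper's query Q_Del-Deg = −f/2 has global sensitivity 1 under edge-level neighboring and is sensitivity-monotonic: Q_Del-Deg(G, τ) ≥ Q_Del-Deg(G', τ) when G ⊆ G'.) -/

import Mathlib

open scoped symmDiff

variable {V : Type*}

noncomputable section

/-- Degree of a vertex `v` in `G`. -/
def deg [Fintype V] (G : SimpleGraph V) (v : V) : ℕ :=
  (G.neighborSet v).ncard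

/-- Maximum degree of `G`. -/
def maxDeg [Fintype V] (G : SimpleGraph V) : ℕ :=
  Finset.univ.sup (deg G)

/-- Number of vertices of `G` with degree at least `τ`. -/
def Ntau [Fintype V] (G : SimpleGraph V) (τ : ℕ) : ℕ :=
  {v : V | τ ≤ deg G v}.ncard

/-- Edge distance: the number of edges in the symmetric difference of the edge sets. -/
def edgeDist (G G' : SimpleGraph V) : ℕ :=
  (G.edgeSet ∆ G'.edgeSet).ncard

/-- Lexicographic key of an edge: the unordered pair written with its smaller endpoint first,
compared lexicographically. -/
def edgeKey [LinearOrder V] (e : Sym2 V) : Lex (V × V) :=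
  Sym2.lift ⟨fun a b => toLex (min a b, max a b), fun a b => by simp only []; rw [min_comm, max_comm]⟩ e

/-- `e` is among the `τ` smallest edges (in the fixed lexicographic order) incident to `v`
in `G`. -/
def clipKeep [Fintype V] [LinearOrder V] (G : SimpleGraph V) (τ : ℕ) (v : V)
    (e : Sym2 V) : Prop :=
  {e' ∈ G.incidenceSet v | edgeKey e' ≤ edgeKey e}.ncard ≤ τ

/-- The clipped graph `Clip G τ`: an edge of `G` is retained iff, for each of its two
endpoints `v`, it is among the `τ` smallest edges incident to `v` in `G`. -/
def Clip [Fintype V] [LinearOrder V] (G : SimpleGraph V) (τ : ℕ) : SimpleGraph V where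
  Adj a b := G.Adj a b ∧ clipKeep G τ a s(a, b) ∧ clipKeep G τ b s(a, b)
  symm := by
    constructor
    intro a b h
    refine ⟨h.1.symm, ?_, ?_⟩
    · rw [Sym2.eq_swap]; exact h.2.2
    · rw [Sym2.eq_swap]; exact h.2.1
  loopless := ⟨fun a h => G.irrefl h.1⟩

/-- Naive clipping: delete every edge having at least one endpoint of degree `> τ` in `G`. -/
def NaiveClip [Fintype V] (G : SimpleGraph V) (τ : ℕ) : SimpleGraph V where
  Adj a b := G.Adj a b ∧ deg G a ≤ τ ∧ deg G b ≤ τ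
  symm := ⟨fun _ _ h => ⟨h.1.symm, h.2.2, h.2.1⟩⟩
  loopless := ⟨fun a h => G.irrefl h.1⟩

/-- The graph obtained from `G` by deleting all vertices in `S` together with their
incident edges. -/
def deleteVerts (G : SimpleGraph V) (S : Set V) : SimpleGraph V where
  Adj a b := G.Adj a b ∧ a ∉ S ∧ b ∉ S
  symm := ⟨fun _ _ h => ⟨h.1.symm, h.2.2, h.2.1⟩⟩
  loopless := ⟨fun a h => G.irrefl h.1⟩

/-- `DelN G τ`: the minimum cardinality of a vertex set whose deletion bounds the maximum
degree of `G` by `τ`. (The paper's `Q_Del-N(G, τ)` equals `-DelN G τ`.) -/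
def DelN [Fintype V] (G : SimpleGraph V) (τ : ℕ) : ℕ :=
  sInf {n | ∃ S : Set V, S.ncard = n ∧ maxDeg (deleteVerts G S) ≤ τ}

/-- Total excess of vertex degrees over `τ`. (The paper's `Q_Del-Deg(G, τ)` equals
`-fExcess G τ / 2`.) -/
def fExcess [Fintype V] (G : SimpleGraph V) (τ : ℕ) : ℕ :=
  ∑ v, (deg G v - τ)

/-- A `τ`-feasible pair `(x, y)` for the LP relaxation of node deletion. -/
structure IsFeasible [Fintype V] (G : SimpleGraph V) (τ : ℕ) (x : V → ℝ)
    (y : Sym2 V → ℝ) : Prop where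
  x_mem : ∀ v, x v ∈ Set.Icc (0 : ℝ) 1
  y_mem : ∀ e ∈ G.edgeSet, y e ∈ Set.Icc (0 : ℝ) 1
  edge_cons : ∀ a b, G.Adj a b → 1 - x a - x b ≤ y s(a, b)
  deg_cons : ∀ v, ∑ᶠ e ∈ G.incidenceSet v, y e ≤ (τ : ℝ)

/-- The LP value: infimum of `Σ_v x_v` over all `τ`-feasible pairs.
(The paper's `Q_LP-Del-N(G, τ)` equals `-LPDelN G τ`.) -/
def LPDelN [Fintype V] (G : SimpleGraph V) (τ : ℕ) : ℝ :=
  sInf {t : ℝ | ∃ x y, IsFeasible G τ x y ∧ t = ∑ v, x v}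

/-!
Adding the edge `e₀` only adds `e₀` to the incidence sets of its two endpoints and leaves all
other incidence sets unchanged. So every degree weakly increases, each endpoint's degree grows by
at most one, and `d ↦ d - τ` is monotone and `1`-Lipschitz on `ℕ`.
-/

variable {G G' : SimpleGraph V} {e : Sym2 V}

namespace SimpleGraph

theorem incidenceSet_subset_insert_of_edgeSet_subset_insert
    (h : G'.edgeSet ⊆ insert e G.edgeSet) (v : V) :
    G'.incidenceSet v ⊆ insert e (G.incidenceSet v) := by
  rintro f ⟨hf, hvf⟩
  rcases h hf with rfl | hfG
  · exact Set.mem_insert _ _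
  · exact Set.mem_insert_of_mem _ ⟨hfG, hvf⟩

theorem incidenceSet_subset_of_edgeSet_subset_insert_of_notMem
    (h : G'.edgeSet ⊆ insert e G.edgeSet) {v : V} (hv : v ∉ e) :
    G'.incidenceSet v ⊆ G.incidenceSet v := by
  intro f hf
  rcases incidenceSet_subset_insert_of_edgeSet_subset_insert h v hf with rfl | hfG
  · exact absurd hf.2 hv
  · exact hfG

end SimpleGraph

theorem deg_eq_ncard_incidenceSet [Fintype V] (G : SimpleGraph V) (v : V) :
    deg G v = (G.incidenceSet v).ncard := by
  classical exact Nat.card_congr (G.incidenceSetEquivNeighborSet v).symm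

theorem deg_mono [Fintype V] (h : G ≤ G') (v : V) : deg G v ≤ deg G' v :=
  Set.ncard_le_ncard fun _ hw => h hw

theorem deg_le_deg_add_of_edgeSet_subset_insert [Fintype V] [DecidableEq V]
    (h : G'.edgeSet ⊆ insert e G.edgeSet) (v : V) :
    deg G' v ≤ deg G v + if v ∈ e then 1 else 0 := by
  simp only [deg_eq_ncard_incidenceSet]
  split_ifs with hv
  · exact (Set.ncard_le_ncard
      (G.incidenceSet_subset_insert_of_edgeSet_subset_insert h v)).trans (Set.ncard_insert_le _ _)
  · exact Set.ncard_le_ncard (G.incidenceSet_subset_of_edgeSet_subset_insert_of_notMem h hv)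

theorem Sym2.sum_ite_mem_le_two [Fintype V] [DecidableEq V] (e : Sym2 V) :
    ∑ v, (if v ∈ e then 1 else 0) ≤ 2 := by
  rw [Finset.sum_boole, Nat.cast_id]
  calc (Finset.univ.filter (· ∈ e)).card = e.toFinset.card := by
        congr 1; ext v; simp [Sym2.mem_toFinset]
    _ ≤ 2 := by rw [Sym2.card_toFinset]; split_ifs <;> omega

theorem fExcess_mono [Fintype V] (h : G ≤ G') (τ : ℕ) : fExcess G τ ≤ fExcess G' τ :=
  Finset.sum_le_sum fun v _ => Nat.sub_le_sub_right (deg_mono h v) τ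

theorem fExcess_le_add_two_of_edgeSet_subset_insert [Fintype V]
    (h : G'.edgeSet ⊆ insert e G.edgeSet) (τ : ℕ) : fExcess G' τ ≤ fExcess G τ + 2 := by
  classical
  calc fExcess G' τ ≤ ∑ v, ((deg G v - τ) + if v ∈ e then 1 else 0) :=
        Finset.sum_le_sum fun v _ => by
          have := deg_le_deg_add_of_edgeSet_subset_insert h v
          omega
    _ = fExcess G τ + ∑ v, (if v ∈ e then 1 else 0) := Finset.sum_add_distrib
    _ ≤ fExcess G τ + 2 := Nat.add_le_add_left (Sym2.sum_ite_mem_le_two e) _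

theorem fExcess_sensitivity_general [Fintype V]
    (G G' : SimpleGraph V) (e₀ : Sym2 V) (τ : ℕ)
    (hG' : G'.edgeSet = insert e₀ G.edgeSet) :
    fExcess G τ ≤ fExcess G' τ ∧ fExcess G' τ ≤ fExcess G τ + 2 := by
  have hle : G ≤ G' := SimpleGraph.edgeSet_subset_edgeSet.mp (hG' ▸ Set.subset_insert _ _)
  exact ⟨fExcess_mono hle τ, fExcess_le_add_two_of_edgeSet_subset_insert hG'.subset τ⟩

/-- For edge-neighboring graphs `G ⊆ G'` (one extra edge `e₀`),
`f(G, τ) ≤ f(G', τ) ≤ f(G, τ) + 2`: the query `Q_Del-Deg = -f/2` has global sensitivity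
`1` under edge-level neighboring and is sensitivity-monotonic. -/
theorem fExcess_sensitivity [Fintype V]
    (G G' : SimpleGraph V) (e₀ : Sym2 V) (τ : ℕ)
    (he₀ : e₀ ∉ G.edgeSet)
    (hG' : G'.edgeSet = insert e₀ G.edgeSet) :
    fExcess G τ ≤ fExcess G' τ ∧ fExcess G' τ ≤ fExcess G τ + 2 :=
  fExcess_sensitivity_general G G' e₀ τ hG'

end
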